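/- Let h > 0 and q_ℓ, q_m, q ∈ ℝ^n, and suppose the midpoint discrete Euler–Lagrange equations hold, i.e. ∂L_d/∂q_m^γ = 0 for every γ. Then the discrete momentum evolution identity holds for every index γ: ∂L_d/∂q^γ + ∂L_d/∂q_ℓ^γ = (h/12) Σ_{α,β} ∂_γ M_{αβ}(q_ℓ) g_ℓ^α g_ℓ^β + (h/3) Σ_{α,β} ∂_γ M_{αβ}(q_m) g_m^α g_m^β + (h/12) Σ_{α,β} ∂_γ M_{αβ}(q) g^α g^β − (h/6) ∂_γ V(q_ℓ) − (2h/3) ∂_γ V(q_m) − (h/6) ∂_γ V(q). (Here ∂L_d/∂q_ℓ^γ and ∂L_d/∂q^γ denote the partial derivatives of L_d with respect to the γ-th coordinates of its first and third arguments.) -/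

import Mathlib

open Matrix

/-- Partial derivative of a scalar function on ℝ^n in the γ-th coordinate direction. -/
noncomputable def pderiv' {n : ℕ} (f : (Fin n → ℝ) → ℝ) (γ : Fin n) (x : Fin n → ℝ) : ℝ :=
  fderiv ℝ f x (Pi.single γ 1)

/-- Gear discrete velocity on the left of the interval. -/
noncomputable def gearLeft {n : ℕ} (h : ℝ) (qℓ qm q : Fin n → ℝ) : Fin n → ℝ :=
  (1 / h) • (-(3 : ℝ) • qℓ + (4 : ℝ) • qm - q)

/-- Gear discrete velocity at the middle of the interval. -/
noncomputable def gearMid {n : ℕ} (h : ℝ) (qℓ qm q : Fin n → ℝ) : Fin n → ℝ :=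
  (1 / h) • (q - qℓ)

/-- Gear discrete velocity on the right of the interval. -/
noncomputable def gearRight {n : ℕ} (h : ℝ) (qℓ qm q : Fin n → ℝ) : Fin n → ℝ :=
  (1 / h) • (qℓ - (4 : ℝ) • qm + (3 : ℝ) • q)

/-- The Simpson discrete Lagrangian. -/
noncomputable def simpsonDiscreteLagrangian {n : ℕ}
    (M : (Fin n → ℝ) → Matrix (Fin n) (Fin n) ℝ) (V : (Fin n → ℝ) → ℝ)
    (h : ℝ) (qℓ qm q : Fin n → ℝ) : ℝ :=
  (h / 2) * ((1 / 6) * (gearLeft h qℓ qm q ⬝ᵥ (M qℓ).mulVec (gearLeft h qℓ qm q))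
      + (2 / 3) * (gearMid h qℓ qm q ⬝ᵥ (M qm).mulVec (gearMid h qℓ qm q))
      + (1 / 6) * (gearRight h qℓ qm q ⬝ᵥ (M q).mulVec (gearRight h qℓ qm q)))
    - h * ((1 / 6) * V qℓ + (2 / 3) * V qm + (1 / 6) * V q)

/-!
The Gear velocities are unchanged when the three points are translated by a common vector `y`,
so `y ↦ L_d(q_ℓ + y, q_m + y, q + y)` depends on `y` only through `M` and `V` evaluated at the
shifted points. Its derivative at `y = 0` is, by the chain rule, the sum of the three partial
derivatives of `L_d`, of which the middle one vanishes by the discrete Euler–Lagrange equation;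
differentiating the explicit translated formula instead gives the right-hand side.
-/

section General

variable {𝕜 E G ι : Type*} [NontriviallyNormedField 𝕜] [NormedAddCommGroup E] [NormedSpace 𝕜 E]
  [NormedAddCommGroup G] [NormedSpace 𝕜 G] [Fintype ι]

open ContinuousLinearMap in
theorem fderiv_comp_add_add_add_apply (f : E → E → E → G) {a b c : E}
    (hf : DifferentiableAt 𝕜 (fun p : E × E × E => f p.1 p.2.1 p.2.2) (a, b, c)) (v : E) :
    fderiv 𝕜 (fun y => f (a + y) (b + y) (c + y)) 0 v
      = fderiv 𝕜 (fun y => f y b c) a v + fderiv 𝕜 (fun y => f a y c) b v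
        + fderiv 𝕜 (fun y => f a b y) c v := by
  set F : E × E × E → G := fun p => f p.1 p.2.1 p.2.2
  set D := fderiv 𝕜 F (a, b, c)
  have hD : HasFDerivAt F D (a, b, c) := hf.hasFDerivAt
  have hℓ : HasFDerivAt (fun y => f y b c) (D.comp (inl 𝕜 E (E × E))) a :=
    hD.comp (f := fun y => (y, b, c)) a (hasFDerivAt_prodMk_left a (b, c))
  have hm : HasFDerivAt (fun y => f a y c) (D.comp ((inr 𝕜 E (E × E)).comp (inl 𝕜 E E))) b :=
    hD.comp (f := fun y => (a, y, c)) b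
      ((hasFDerivAt_prodMk_right a (b, c)).comp b (hasFDerivAt_prodMk_left b c))
  have hr : HasFDerivAt (fun y => f a b y) (D.comp ((inr 𝕜 E (E × E)).comp (inr 𝕜 E E))) c :=
    hD.comp (f := fun y => (a, b, y)) c
      ((hasFDerivAt_prodMk_right a (b, c)).comp c (hasFDerivAt_prodMk_right b c))
  have hdiag : HasFDerivAt (fun y => f (a + y) (b + y) (c + y))
      (D.comp ((ContinuousLinearMap.id 𝕜 E).prod
        ((ContinuousLinearMap.id 𝕜 E).prod (ContinuousLinearMap.id 𝕜 E)))) 0 := by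
    have hD₀ : HasFDerivAt F D ((fun y : E => (a + y, b + y, c + y)) 0) := by simpa using hD
    exact hD₀.comp (f := fun y : E => (a + y, b + y, c + y)) 0
      (((hasFDerivAt_id (0 : E)).const_add a).prodMk
        (((hasFDerivAt_id (0 : E)).const_add b).prodMk ((hasFDerivAt_id (0 : E)).const_add c)))
  rw [hℓ.fderiv, hm.fderiv, hr.fderiv, hdiag.fderiv]
  simp only [ContinuousLinearMap.comp_apply, ContinuousLinearMap.prod_apply,
    ContinuousLinearMap.id_apply, ContinuousLinearMap.inl_apply, ContinuousLinearMap.inr_apply,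
    ← map_add, Prod.mk_add_mk, add_zero, zero_add]

theorem hasFDerivAt_dotProduct_mulVec_const {A : E → Matrix ι ι 𝕜} {x : E} (u : ι → 𝕜)
    (hA : ∀ i j, DifferentiableAt 𝕜 (fun x => A x i j) x) :
    HasFDerivAt (fun x => u ⬝ᵥ A x *ᵥ u)
      (∑ i, ∑ j, (u i * u j) • fderiv 𝕜 (fun x => A x i j) x) x := by
  have hexp : (fun x => u ⬝ᵥ A x *ᵥ u) = fun x => ∑ i, ∑ j, (u i * u j) * A x i j := by
    ext x
    simp only [dotProduct, mulVec, Finset.mul_sum]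
    exact Finset.sum_congr rfl fun i _ => Finset.sum_congr rfl fun j _ => by ring
  rw [hexp]
  exact HasFDerivAt.fun_sum fun i _ => HasFDerivAt.fun_sum fun j _ =>
    (hA i j).hasFDerivAt.const_mul _

theorem Differentiable.dotProduct_mulVec {u w : E → ι → 𝕜} {A : E → Matrix ι ι 𝕜}
    (hu : Differentiable 𝕜 u) (hA : ∀ i j, Differentiable 𝕜 (fun x => A x i j))
    (hw : Differentiable 𝕜 w) :
    Differentiable 𝕜 (fun x => u x ⬝ᵥ A x *ᵥ w x) := by
  rw [differentiable_pi] at hu hw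
  simp only [dotProduct, mulVec]
  fun_prop

end General

section Simpson

variable {n : ℕ}

theorem gearLeft_add_add_add (h : ℝ) (qℓ qm q y : Fin n → ℝ) :
    gearLeft h (qℓ + y) (qm + y) (q + y) = gearLeft h qℓ qm q := by
  unfold gearLeft; module

theorem gearMid_add_add_add (h : ℝ) (qℓ qm q y : Fin n → ℝ) :
    gearMid h (qℓ + y) (qm + y) (q + y) = gearMid h qℓ qm q := by
  unfold gearMid; module

theorem gearRight_add_add_add (h : ℝ) (qℓ qm q y : Fin n → ℝ) :
    gearRight h (qℓ + y) (qm + y) (q + y) = gearRight h qℓ qm q := by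
  unfold gearRight; module

variable {M : (Fin n → ℝ) → Matrix (Fin n) (Fin n) ℝ} {V : (Fin n → ℝ) → ℝ}

theorem simpsonDiscreteLagrangian_add_add_add (h : ℝ) (qℓ qm q y : Fin n → ℝ) :
    simpsonDiscreteLagrangian M V h (qℓ + y) (qm + y) (q + y)
      = (h / 2) * ((1 / 6) * (gearLeft h qℓ qm q ⬝ᵥ M (qℓ + y) *ᵥ gearLeft h qℓ qm q)
          + (2 / 3) * (gearMid h qℓ qm q ⬝ᵥ M (qm + y) *ᵥ gearMid h qℓ qm q)
          + (1 / 6) * (gearRight h qℓ qm q ⬝ᵥ M (q + y) *ᵥ gearRight h qℓ qm q))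
        - h * ((1 / 6) * V (qℓ + y) + (2 / 3) * V (qm + y) + (1 / 6) * V (q + y)) := by
  rw [simpsonDiscreteLagrangian, gearLeft_add_add_add, gearMid_add_add_add,
    gearRight_add_add_add]

theorem differentiable_simpsonDiscreteLagrangian
    (hM : ∀ α β, Differentiable ℝ (fun x => M x α β)) (hV : Differentiable ℝ V) (h : ℝ) :
    Differentiable ℝ (fun p : (Fin n → ℝ) × (Fin n → ℝ) × (Fin n → ℝ) =>
      simpsonDiscreteLagrangian M V h p.1 p.2.1 p.2.2) := by
  have hK : ∀ u π : (Fin n → ℝ) × (Fin n → ℝ) × (Fin n → ℝ) → Fin n → ℝ,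
      Differentiable ℝ u → Differentiable ℝ π →
        Differentiable ℝ (fun p => u p ⬝ᵥ M (π p) *ᵥ u p) :=
    fun u π hu hπ => hu.dotProduct_mulVec (fun α β => (hM α β).comp hπ) hu
  have hℓ := hK (fun p => gearLeft h p.1 p.2.1 p.2.2) Prod.fst (by unfold gearLeft; fun_prop)
    differentiable_fst
  have hm := hK (fun p => gearMid h p.1 p.2.1 p.2.2) (fun p => p.2.1) (by unfold gearMid; fun_prop)
    (by fun_prop)
  have hr := hK (fun p => gearRight h p.1 p.2.1 p.2.2) (fun p => p.2.2)
    (by unfold gearRight; fun_prop) (by fun_prop)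
  unfold simpsonDiscreteLagrangian
  fun_prop

theorem fderiv_simpsonDiscreteLagrangian_add_add_add_apply
    (hM : ∀ α β, Differentiable ℝ (fun x => M x α β)) (hV : Differentiable ℝ V)
    (h : ℝ) (qℓ qm q v : Fin n → ℝ) :
    fderiv ℝ (fun y => simpsonDiscreteLagrangian M V h (qℓ + y) (qm + y) (q + y)) 0 v
      = (h / 12) * (∑ α, ∑ β, fderiv ℝ (fun x => M x α β) qℓ v
            * gearLeft h qℓ qm q α * gearLeft h qℓ qm q β)
        + (h / 3) * (∑ α, ∑ β, fderiv ℝ (fun x => M x α β) qm v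
            * gearMid h qℓ qm q α * gearMid h qℓ qm q β)
        + (h / 12) * (∑ α, ∑ β, fderiv ℝ (fun x => M x α β) q v
            * gearRight h qℓ qm q α * gearRight h qℓ qm q β)
        - (h / 6) * fderiv ℝ V qℓ v
        - (2 * h / 3) * fderiv ℝ V qm v
        - (h / 6) * fderiv ℝ V q v := by
  have hK : ∀ x u : Fin n → ℝ, HasFDerivAt (fun y => u ⬝ᵥ M (x + y) *ᵥ u)
      (∑ α, ∑ β, (u α * u β) • fderiv ℝ (fun x => M x α β) x) 0 := fun x u =>
    (hasFDerivAt_comp_add_left (f := fun z => u ⬝ᵥ M z *ᵥ u) x).mpr <| by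
      rw [add_zero]
      exact hasFDerivAt_dotProduct_mulVec_const u fun α β => (hM α β).differentiableAt
  have hP : ∀ x : Fin n → ℝ, HasFDerivAt (fun y => V (x + y)) (fderiv ℝ V x) 0 := fun x =>
    (hasFDerivAt_comp_add_left (f := V) x).mpr <| by rw [add_zero]; exact (hV x).hasFDerivAt
  simp only [simpsonDiscreteLagrangian_add_add_add]
  rw [(((((hK qℓ _).const_mul (1 / 6)).fun_add ((hK qm _).const_mul (2 / 3))).fun_add
    ((hK q _).const_mul (1 / 6))).const_mul (h / 2)).fun_sub
    (((((hP qℓ).const_mul (1 / 6)).fun_add ((hP qm).const_mul (2 / 3))).fun_add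
    ((hP q).const_mul (1 / 6))).const_mul h) |>.fderiv]
  have hreorder : ∀ (x u : Fin n → ℝ), ∑ α, ∑ β, u α * u β * fderiv ℝ (fun y => M y α β) x v
      = ∑ α, ∑ β, fderiv ℝ (fun y => M y α β) x v * u α * u β := fun x u =>
    Finset.sum_congr rfl fun α _ => Finset.sum_congr rfl fun β _ => by ring
  simp only [_root_.sub_apply, _root_.add_apply, _root_.smul_apply, FunLike.coe_sum,
    Finset.sum_apply, smul_eq_mul, hreorder]
  ring

end Simpson

theorem simpson_discrete_momentum_evolution_general
    (n : ℕ) (M : (Fin n → ℝ) → Matrix (Fin n) (Fin n) ℝ) (V : (Fin n → ℝ) → ℝ)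
    (hM : ∀ α β, ContDiff ℝ 1 (fun x => M x α β))
    (hV : ContDiff ℝ 1 V)
    (h : ℝ) (qℓ qm q : Fin n → ℝ)
    (hmid : ∀ γ : Fin n,
      fderiv ℝ (fun y => simpsonDiscreteLagrangian M V h qℓ y q) qm (Pi.single γ 1) = 0) :
    ∀ γ : Fin n,
      fderiv ℝ (fun y => simpsonDiscreteLagrangian M V h qℓ qm y) q (Pi.single γ 1)
        + fderiv ℝ (fun y => simpsonDiscreteLagrangian M V h y qm q) qℓ (Pi.single γ 1)
      = (h / 12) * (∑ α, ∑ β, pderiv' (fun x => M x α β) γ qℓ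
            * gearLeft h qℓ qm q α * gearLeft h qℓ qm q β)
        + (h / 3) * (∑ α, ∑ β, pderiv' (fun x => M x α β) γ qm
            * gearMid h qℓ qm q α * gearMid h qℓ qm q β)
        + (h / 12) * (∑ α, ∑ β, pderiv' (fun x => M x α β) γ q
            * gearRight h qℓ qm q α * gearRight h qℓ qm q β)
        - (h / 6) * pderiv' V γ qℓ
        - (2 * h / 3) * pderiv' V γ qm
        - (h / 6) * pderiv' V γ q := by
  intro γ
  have hMd : ∀ α β, Differentiable ℝ (fun x => M x α β) :=
    fun α β => (hM α β).differentiable one_ne_zero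
  have hVd : Differentiable ℝ V := hV.differentiable one_ne_zero
  have hdiag := fderiv_comp_add_add_add_apply (simpsonDiscreteLagrangian M V h)
    (differentiable_simpsonDiscreteLagrangian hMd hVd h (qℓ, qm, q)) (Pi.single γ 1)
  rw [fderiv_simpsonDiscreteLagrangian_add_add_add_apply hMd hVd, hmid γ] at hdiag
  unfold pderiv'
  linarith

theorem simpson_discrete_momentum_evolution
    (n : ℕ) (M : (Fin n → ℝ) → Matrix (Fin n) (Fin n) ℝ) (V : (Fin n → ℝ) → ℝ)
    (hM : ∀ α β, ContDiff ℝ 1 (fun x => M x α β))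
    (hMsymm : ∀ x, (M x).IsSymm)
    (hV : ContDiff ℝ 1 V)
    (h : ℝ) (hh : 0 < h) (qℓ qm q : Fin n → ℝ)
    (hmid : ∀ γ : Fin n,
      fderiv ℝ (fun y => simpsonDiscreteLagrangian M V h qℓ y q) qm (Pi.single γ 1) = 0) :
    ∀ γ : Fin n,
      fderiv ℝ (fun y => simpsonDiscreteLagrangian M V h qℓ qm y) q (Pi.single γ 1)
        + fderiv ℝ (fun y => simpsonDiscreteLagrangian M V h y qm q) qℓ (Pi.single γ 1)
      = (h / 12) * (∑ α, ∑ β, pderiv' (fun x => M x α β) γ qℓ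
            * gearLeft h qℓ qm q α * gearLeft h qℓ qm q β)
        + (h / 3) * (∑ α, ∑ β, pderiv' (fun x => M x α β) γ qm
            * gearMid h qℓ qm q α * gearMid h qℓ qm q β)
        + (h / 12) * (∑ α, ∑ β, pderiv' (fun x => M x α β) γ q
            * gearRight h qℓ qm q α * gearRight h qℓ qm q β)
        - (h / 6) * pderiv' V γ qℓ
        - (2 * h / 3) * pderiv' V γ qm
        - (h / 6) * pderiv' V γ q :=
  simpson_discrete_momentum_evolution_general n M V hM hV h qℓ qm q hmid
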